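/- If R is the free (tensor) algebra T(V) on a vector space V, then Ω¹R is a free R-bimodule on V; that is, the natural map R ⊗ V ⊗ R → Ω¹R sending r ⊗ v ⊗ r' ↦ r·(dv)·r' is an isomorphism of R-bimodules, where dv = 1⊗v − v⊗1. -/

import Mathlib

/-!
`T(V)` acts on `(R ⊗ V ⊗ R) × R` by `v • (m, x) = (v • m + 1 ⊗ v ⊗ x, v * x)`, and the first
coordinate of `b • (0, 1)` is the universal derivation `D b` with `D v = 1 ⊗ v ⊗ 1`, so
`D (v * b) = v • D b + 1 ⊗ v ⊗ b`. Hence `g : a ⊗ b ↦ a • D b` is a left inverse of `ψ`. Since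
`(m, x) ↦ ψ m - 1 ⊗ x` intertwines the action with left multiplication on `R ⊗ R`, one gets
`ψ (D b) = 1 ⊗ b - b ⊗ 1`, i.e. `ψ ∘ g = id - μ(·) ⊗ 1` for the multiplication `μ`, so the
range of `ψ` is `ker μ`.
-/

open TensorProduct

section LiftBaseChangeLeft

variable {k N P : Type*} (A : Type*) [CommSemiring k] [Semiring A] [Algebra k A]
  [AddCommMonoid N] [Module k N] [AddCommMonoid P] [Module k P] [Module A P]
  [IsScalarTower k A P]

def LinearMap.liftBaseChangeLeft (l : N →ₗ[k] P) : A ⊗[k] N →ₗ[A] P :=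
  AlgebraTensorModule.lift (LinearMap.toSpanSingleton A _ l)

variable {A}

@[simp]
theorem LinearMap.liftBaseChangeLeft_tmul (l : N →ₗ[k] P) (a : A) (n : N) :
    l.liftBaseChangeLeft A (a ⊗ₜ n) = a • l n := rfl

end LiftBaseChangeLeft

namespace TensorAlgebra

theorem comp_eq_comp_of_ι {k V X Y : Type*} [CommSemiring k] [AddCommMonoid V] [Module k V]
    [AddCommMonoid X] [Module k X] [AddCommMonoid Y] [Module k Y]
    {φ : TensorAlgebra k V →ₐ[k] Module.End k X} {ρ : TensorAlgebra k V →ₐ[k] Module.End k Y}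
    {f : X →ₗ[k] Y} (h : ∀ v, f ∘ₗ φ (ι k v) = ρ (ι k v) ∘ₗ f) (a : TensorAlgebra k V) :
    f ∘ₗ φ a = ρ a ∘ₗ f := by
  induction a using TensorAlgebra.induction with
  | algebraMap c =>
    ext x
    simp [Module.algebraMap_end_apply]
  | ι v => exact h v
  | mul a b ha hb =>
    rw [map_mul, map_mul, Module.End.mul_eq_comp, Module.End.mul_eq_comp, ← LinearMap.comp_assoc,
      ha, LinearMap.comp_assoc, hb, LinearMap.comp_assoc]
  | add a b ha hb => rw [map_add, map_add, LinearMap.comp_add, LinearMap.add_comp, ha, hb]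

variable (k V : Type*) [CommRing k] [AddCommMonoid V] [Module k V]

local notation "R" => TensorAlgebra k V
local notation "M" => TensorAlgebra k V ⊗[k] (V ⊗[k] TensorAlgebra k V)

def freeBimoduleMap : M →ₗ[R] R ⊗[k] R :=
  LinearMap.liftBaseChangeLeft R
    (TensorProduct.mk k R R 1 ∘ₗ LinearMap.mul' k R ∘ₗ map (ι k) LinearMap.id
      - map (ι k) LinearMap.id)

def twistedGen : V →ₗ[k] Module.End k (M × R) :=
  LinearMap.mk₂ k (fun v p => (ι k v • p.1 + 1 ⊗ₜ (v ⊗ₜ p.2), ι k v * p.2))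
    (fun v w p => by ext <;> simp [add_smul, tmul_add, add_tmul, add_mul]; abel)
    (fun c v p => by ext <;> simp [smul_add, ← smul_tmul', ← tmul_smul, smul_comm c])
    (fun v p q => by ext <;> simp [smul_add, tmul_add, mul_add]; abel)
    (fun c v p => by ext <;> simp [smul_add, ← tmul_smul, smul_comm c])

def twistedAction : R →ₐ[k] Module.End k (M × R) := lift k (twistedGen k V)

def freeDerivation : R →ₗ[k] M :=
  LinearMap.fst k M R ∘ₗ LinearMap.applyₗ ((0 : M), (1 : R)) ∘ₗ (twistedAction k V).toLinearMap

def freeBimoduleRetraction : R ⊗[k] R →ₗ[R] M := (freeDerivation k V).liftBaseChangeLeft R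

variable {k V}

@[simp]
theorem freeBimoduleMap_tmul (r r' : R) (v : V) :
    freeBimoduleMap k V (r ⊗ₜ (v ⊗ₜ r')) = r ⊗ₜ (ι k v * r') - (r * ι k v) ⊗ₜ r' := by
  simp [freeBimoduleMap, smul_sub, smul_tmul', smul_eq_mul]

theorem twistedAction_ι_apply (v : V) (p : M × R) :
    twistedAction k V (ι k v) p = (ι k v • p.1 + 1 ⊗ₜ (v ⊗ₜ p.2), ι k v * p.2) := by
  simp [twistedAction, twistedGen]

theorem snd_twistedAction_apply (a : R) (p : M × R) : (twistedAction k V a p).2 = a * p.2 :=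
  LinearMap.congr_fun (comp_eq_comp_of_ι (f := LinearMap.snd k M R) (ρ := Algebra.lmul k R)
    (fun v => by ext p <;> simp [twistedAction_ι_apply]) a) p

theorem twistedAction_apply_zero_one (b : R) :
    twistedAction k V b (0, 1) = (freeDerivation k V b, b) := by
  ext
  · rfl
  · simp [snd_twistedAction_apply]

theorem freeDerivation_ι_mul (v : V) (b : R) :
    freeDerivation k V (ι k v * b) = ι k v • freeDerivation k V b + 1 ⊗ₜ (v ⊗ₜ b) := by
  have h := congr_arg Prod.fst (twistedAction_apply_zero_one (k := k) (ι k v * b))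
  rw [map_mul, Module.End.mul_apply, twistedAction_apply_zero_one, twistedAction_ι_apply] at h
  exact h.symm

theorem freeBimoduleMap_freeDerivation (b : R) :
    freeBimoduleMap k V (freeDerivation k V b) = 1 ⊗ₜ b - b ⊗ₜ 1 := by
  let Ψ : M × R →ₗ[k] R ⊗[k] R :=
    (freeBimoduleMap k V).restrictScalars k ∘ₗ LinearMap.fst k M R
      - TensorProduct.mk k R R 1 ∘ₗ LinearMap.snd k M R
  have hΨ := LinearMap.congr_fun (comp_eq_comp_of_ι (φ := twistedAction k V) (f := Ψ)
    (ρ := Algebra.lsmul k k (R ⊗[k] R)) (fun v => LinearMap.ext fun p => by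
      simp [Ψ, twistedAction_ι_apply, smul_sub, smul_tmul', smul_eq_mul]; abel) b) (0, 1)
  simp only [LinearMap.coe_comp, Function.comp_apply, twistedAction_apply_zero_one,
    LinearMap.sub_apply, LinearMap.coe_restrictScalars, LinearMap.coe_fst, LinearMap.coe_snd,
    mk_apply, Algebra.lsmul_coe, map_zero, zero_sub, smul_neg, smul_tmul', smul_eq_mul, mul_one,
    Ψ] at hΨ
  rwa [sub_eq_iff_eq_add, neg_add_eq_sub] at hΨ

theorem freeBimoduleRetraction_freeBimoduleMap (m : M) :
    freeBimoduleRetraction k V (freeBimoduleMap k V m) = m := by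
  induction m using TensorProduct.induction_on with
  | zero => simp
  | add x y hx hy => rw [map_add, map_add, hx, hy]
  | tmul r n =>
    induction n using TensorProduct.induction_on with
    | zero => simp
    | add x y hx hy => rw [tmul_add, map_add, map_add, hx, hy]
    | tmul v r' =>
      simp [freeBimoduleRetraction, freeDerivation_ι_mul, mul_smul, smul_tmul', smul_eq_mul]

theorem freeBimoduleMap_freeBimoduleRetraction (x : R ⊗[k] R) :
    freeBimoduleMap k V (freeBimoduleRetraction k V x) = x - LinearMap.mul' k R x ⊗ₜ 1 := by
  induction x using TensorProduct.induction_on with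
  | zero => simp
  | add x y hx hy => rw [map_add, map_add, hx, hy, map_add, add_tmul]; abel
  | tmul a b =>
    simp [freeBimoduleRetraction, freeBimoduleMap_freeDerivation, smul_sub, smul_tmul',
      smul_eq_mul]

theorem mul'_freeBimoduleMap (m : M) : LinearMap.mul' k R (freeBimoduleMap k V m) = 0 := by
  induction m using TensorProduct.induction_on with
  | zero => simp
  | add x y hx hy => rw [map_add, map_add, hx, hy, add_zero]
  | tmul r n =>
    induction n using TensorProduct.induction_on with
    | zero => simp
    | add x y hx hy => rw [tmul_add, map_add, map_add, hx, hy, add_zero]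
    | tmul v r' => simp [mul_assoc]

theorem freeBimoduleMap_injective : Function.Injective (freeBimoduleMap k V) :=
  Function.LeftInverse.injective freeBimoduleRetraction_freeBimoduleMap

theorem range_freeBimoduleMap :
    LinearMap.range ((freeBimoduleMap k V).restrictScalars k) =
      LinearMap.ker (LinearMap.mul' k R) := by
  refine le_antisymm ?_ fun x hx => ⟨freeBimoduleRetraction k V x, ?_⟩
  · rintro _ ⟨m, rfl⟩
    exact mul'_freeBimoduleMap m
  · rw [LinearMap.restrictScalars_apply, freeBimoduleMap_freeBimoduleRetraction,
      LinearMap.mem_ker.mp hx, zero_tmul, sub_zero]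

end TensorAlgebra

theorem stmt2 (k : Type*) [Field k] (V : Type*) [AddCommGroup V] [Module k V] :
    ∃ ψ : TensorAlgebra k V ⊗[k] (V ⊗[k] TensorAlgebra k V) →ₗ[k]
        TensorAlgebra k V ⊗[k] TensorAlgebra k V,
      (∀ (r r' : TensorAlgebra k V) (v : V),
        ψ (r ⊗ₜ[k] (v ⊗ₜ[k] r')) =
          (r ⊗ₜ[k] (1 : TensorAlgebra k V)) *
            ((1 : TensorAlgebra k V) ⊗ₜ[k] TensorAlgebra.ι k v
              - TensorAlgebra.ι k v ⊗ₜ[k] (1 : TensorAlgebra k V)) *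
            ((1 : TensorAlgebra k V) ⊗ₜ[k] r')) ∧
      Function.Injective ψ ∧
      LinearMap.range ψ = LinearMap.ker (LinearMap.mul' k (TensorAlgebra k V)) := by
  refine ⟨(TensorAlgebra.freeBimoduleMap k V).restrictScalars k, fun r r' v => ?_,
    TensorAlgebra.freeBimoduleMap_injective, TensorAlgebra.range_freeBimoduleMap⟩
  simp [mul_sub, sub_mul]
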